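/- arXiv:2308.13155 — 6 statements merged into one kernel-verified Lean document; each statement's English description precedes it below -/
import Mathlib

section
/- For every edge e and every x = (θ, q) ∈ D_e, every point x⁺ = (θ⁺, q⁺) ∈ G_e(x) satisfies x⁺ ∈ X and |m_e(x⁺)| < π + δ (indeed |m_e(x⁺)| ≤ max(2δ, π) < π + δ). -/
open Real Set

noncomputable section

/-- For every edge `e` and every `x = (θ,q) ∈ D_e`, every point `x⁺ = (θ,q⁺)` obtained by
the jump map `G_e` (which replaces `q_e` by a minimizer `h* ∈ {-1,0,1}` of
`|θ_{head e} - θ_{tail e} + 2hπ|` and leaves the other components unchanged) satisfies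
`x⁺ ∈ X` and `|m_e(x⁺)| ≤ max(2δ, π) < π + δ`. -/
theorem stmt2 (δ : ℝ) (hδ : δ ∈ Set.Ioo 0 π)
    (n : ℕ) (hn : 2 ≤ n) (G : SimpleGraph (Fin n)) (hG : G.IsTree)
    (tail head : Fin (n-1) → Fin n)
    (hadj : ∀ e, G.Adj (tail e) (head e))
    (hinj : Function.Injective fun e => s(tail e, head e))
    (hsurj : ∀ p ∈ G.edgeSet, ∃ e, s(tail e, head e) = p)
    -- x = (θ, q) ∈ X
    (θ : Fin n → ℝ) (q : Fin (n-1) → ℝ)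
    (hθ : ∀ i, θ i ∈ Set.Icc (-(π+δ)) (π+δ))
    (hq : ∀ e', q e' ∈ ({-1, 0, 1} : Set ℝ))
    -- x ∈ D_e
    (e : Fin (n-1))
    (hD : π + δ ≤ |θ (head e) - θ (tail e) + 2 * q e * π|)
    -- x⁺ = (θ, q') ∈ G_e(x)
    (q' : Fin (n-1) → ℝ)
    (hq'mem : q' e ∈ ({-1, 0, 1} : Set ℝ))
    (hq'min : ∀ h ∈ ({-1, 0, 1} : Set ℝ),
      |θ (head e) - θ (tail e) + 2 * q' e * π| ≤ |θ (head e) - θ (tail e) + 2 * h * π|)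
    (hq'other : ∀ e', e' ≠ e → q' e' = q e') :
    ((∀ i, θ i ∈ Set.Icc (-(π+δ)) (π+δ)) ∧ ∀ e', q' e' ∈ ({-1, 0, 1} : Set ℝ)) ∧
      |θ (head e) - θ (tail e) + 2 * q' e * π| ≤ max (2*δ) π ∧ max (2*δ) π < π + δ := by
  obtain ⟨hδ0, hδπ⟩ := hδ
  have hM1 : (2*δ : ℝ) ≤ max (2*δ) π := le_max_left _ _
  have hM2 : π ≤ max (2*δ) π := le_max_right _ _
  refine ⟨⟨hθ, ?_⟩, ?_, ?_⟩
  · intro e'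
    by_cases h : e' = e
    · subst h; exact hq'mem
    · rw [hq'other e' h]; exact hq e'
  · have h1 := hθ (head e); have h2 := hθ (tail e)
    have hb1 : θ (head e) - θ (tail e) ≤ 2*(π+δ) := by
      have := h1.2; have := h2.1; linarith
    have hb2 : -(2*(π+δ)) ≤ θ (head e) - θ (tail e) := by
      have := h1.1; have := h2.2; linarith
    have h0 := hq'min 0 (by simp)
    have hp := hq'min 1 (by simp)
    have hm := hq'min (-1) (by simp)
    rcases le_total (θ (head e) - θ (tail e)) 0 with hle | hle
    · rcases le_total (-(θ (head e) - θ (tail e))) (max (2*δ) π) with h3 | h3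
      · refine le_trans h0 ?_
        rw [abs_le]; constructor <;> linarith [abs_nonneg (θ (head e) - θ (tail e))]
      · refine le_trans hp ?_
        rw [abs_le]; constructor <;> linarith
    · rcases le_total (θ (head e) - θ (tail e)) (max (2*δ) π) with h3 | h3
      · refine le_trans h0 ?_
        rw [abs_le]; constructor <;> linarith
      · refine le_trans hm ?_
        rw [abs_le]; constructor <;> linarith
  · exact max_lt (by linarith) (by linarith)
end
end

section
/- For every vertex i and every x = (θ, q) ∈ D_i, the point x⁺ = (θ⁺, q⁺) = g_i(x) satisfies: x⁺ ∈ X (in particular every component of q⁺ lies in {-1,0,1}), m_e(x⁺) = m_e(x) for every edge e, and |θ_i⁺| = π - δ < π + δ. -/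
open Real Set

noncomputable section

/-- For every vertex `i` and every `x = (θ,q) ∈ D_i`, the point `x⁺ = g_i(x)` satisfies
`x⁺ ∈ X` (in particular every component of `q⁺` lies in `{-1,0,1}`),
`m_e(x⁺) = m_e(x)` for every edge `e`, and `|θ_i⁺| = π - δ < π + δ`. -/
theorem stmt3 (δ : ℝ) (hδ : δ ∈ Set.Ioo 0 π)
    (n : ℕ) (hn : 2 ≤ n) (G : SimpleGraph (Fin n)) (hG : G.IsTree)
    (tail head : Fin (n-1) → Fin n)
    (hadj : ∀ e, G.Adj (tail e) (head e))
    (hinj : Function.Injective fun e => s(tail e, head e))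
    (hsurj : ∀ p ∈ G.edgeSet, ∃ e, s(tail e, head e) = p)
    -- the state space X
    (X : Set ((Fin n → ℝ) × (Fin (n-1) → ℝ)))
    (hX : X = {x | (∀ j, x.1 j ∈ Set.Icc (-(π+δ)) (π+δ)) ∧ ∀ e, x.2 e ∈ ({-1, 0, 1} : Set ℝ)})
    -- the jump sets D_e
    (De : Fin (n-1) → Set ((Fin n → ℝ) × (Fin (n-1) → ℝ)))
    (hDe : ∀ e, De e = {x ∈ X | π + δ ≤ |x.1 (head e) - x.1 (tail e) + 2 * x.2 e * π|})
    -- the jump set D_i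
    (i : Fin n)
    (Di : Set ((Fin n → ℝ) × (Fin (n-1) → ℝ)))
    (hDi : Di = closure {x ∈ X | (∀ e, x ∉ De e) ∧ |x.1 i| = π + δ})
    -- x = (θ, q) ∈ D_i
    (θ : Fin n → ℝ) (q : Fin (n-1) → ℝ)
    (hxD : (θ, q) ∈ Di)
    -- x⁺ = (θ', q') = g_i(x)
    (θ' : Fin n → ℝ) (q' : Fin (n-1) → ℝ)
    (hθ' : ∀ j, θ' j = if j = i then θ i - Real.sign (θ i) * (2*π) else θ j)
    (hq' : ∀ e, q' e = if head e = i then q e + Real.sign (θ i)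
                       else if tail e = i then q e - Real.sign (θ i) else q e) :
    (θ', q') ∈ X ∧ (∀ e, q' e ∈ ({-1, 0, 1} : Set ℝ)) ∧
      (∀ e, θ' (head e) - θ' (tail e) + 2 * q' e * π
          = θ (head e) - θ (tail e) + 2 * q e * π) ∧
      |θ' i| = π - δ ∧ π - δ < π + δ := by
  obtain ⟨hδ0, hδπ⟩ := hδ
  have hπ0 : (0:ℝ) < π := Real.pi_pos
  -- the closed superset C of the pre-closure set
  set C : Set ((Fin n → ℝ) × (Fin (n-1) → ℝ)) :=
    {x | (∀ j, x.1 j ∈ Set.Icc (-(π+δ)) (π+δ))} ∩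
    ({x | ∀ e, x.2 e ∈ ({-1, 0, 1} : Set ℝ)} ∩
    ({x | ∀ e, |x.1 (head e) - x.1 (tail e) + 2 * x.2 e * π| ≤ π + δ} ∩
     {x | |x.1 i| = π + δ})) with hC
  have hCclosed : IsClosed C := by
    apply IsClosed.inter
    · rw [Set.setOf_forall]
      exact isClosed_iInter fun j =>
        IsClosed.preimage ((continuous_apply j).comp continuous_fst) isClosed_Icc
    apply IsClosed.inter
    · rw [Set.setOf_forall]
      exact isClosed_iInter fun e =>
        IsClosed.preimage ((continuous_apply e).comp continuous_snd)
          (Set.Finite.isClosed (Set.toFinite _))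
    apply IsClosed.inter
    · rw [Set.setOf_forall]
      refine isClosed_iInter fun e => ?_
      have hcont : Continuous fun x : (Fin n → ℝ) × (Fin (n-1) → ℝ) =>
          x.1 (head e) - x.1 (tail e) + 2 * x.2 e * π := by
        apply Continuous.add
        · exact ((continuous_apply (head e)).comp continuous_fst).sub
            ((continuous_apply (tail e)).comp continuous_fst)
        · exact (continuous_const.mul ((continuous_apply e).comp continuous_snd)).mul
            continuous_const
      exact IsClosed.preimage (continuous_abs.comp hcont) isClosed_Iic
    · exact isClosed_eq (continuous_abs.comp ((continuous_apply i).comp continuous_fst))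
        continuous_const
  have hSC : {x ∈ X | (∀ e, x ∉ De e) ∧ |x.1 i| = π + δ} ⊆ C := by
    rintro x ⟨hxX, hxDe, hxi⟩
    rw [hX] at hxX
    refine ⟨hxX.1, hxX.2, fun e => ?_, hxi⟩
    have := hxDe e
    rw [hDe e] at this
    by_contra hcon
    push_neg at hcon
    exact this ⟨by rw [hX]; exact hxX, le_of_lt hcon⟩
  have hxC : (θ, q) ∈ C := by
    rw [hDi] at hxD
    exact closure_minimal hSC hCclosed hxD
  obtain ⟨hθb, hqb, hmb, habs⟩ := hxC
  simp only [Set.mem_setOf_eq] at hθb hqb hmb habs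
  -- basic facts about θ i and its sign
  have hθi : θ i = π + δ ∧ Real.sign (θ i) = 1 ∨
      θ i = -(π + δ) ∧ Real.sign (θ i) = -1 := by
    rcases (abs_eq (by linarith)).mp habs with h | h
    · exact Or.inl ⟨h, by rw [h]; exact Real.sign_of_pos (by linarith)⟩
    · exact Or.inr ⟨h, by rw [h]; exact Real.sign_of_neg (by linarith)⟩
  -- q' components lie in {-1,0,1}
  have hq'mem : ∀ e, q' e ∈ ({-1, 0, 1} : Set ℝ) := by
    intro e
    have hm := abs_le.mp (hmb e)
    have hne : tail e ≠ head e := (hadj e).ne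
    have htb := hθb (tail e)
    have hhb := hθb (head e)
    simp only [Set.mem_Icc] at htb hhb
    have hqe : q e = -1 ∨ q e = 0 ∨ q e = 1 := by
      simpa [Set.mem_insert_iff, Set.mem_singleton_iff] using hqb e
    rw [hq' e]
    simp only [Set.mem_insert_iff, Set.mem_singleton_iff]
    split_ifs with hh ht
    · -- head e = i
      rw [hh] at hm
      rcases hθi with ⟨hv, hs⟩ | ⟨hv, hs⟩ <;> rw [hs] <;> rw [hv] at hm <;>
        rcases hqe with h1 | h1 | h1 <;> rw [h1] at hm ⊢ <;>
        first
          | (exfalso; obtain ⟨hm1, hm2⟩ := hm; linarith [htb.1, htb.2, hhb.1, hhb.2])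
          | norm_num
    · -- tail e = i, head e ≠ i
      rw [ht] at hm
      rcases hθi with ⟨hv, hs⟩ | ⟨hv, hs⟩ <;> rw [hs] <;> rw [hv] at hm <;>
        rcases hqe with h1 | h1 | h1 <;> rw [h1] at hm ⊢ <;>
        first
          | (exfalso; obtain ⟨hm1, hm2⟩ := hm; linarith [htb.1, htb.2, hhb.1, hhb.2])
          | norm_num
    · simpa [Set.mem_insert_iff, Set.mem_singleton_iff] using hqb e
  -- θ' i and its absolute value
  have hθ'i : |θ' i| = π - δ := by
    rw [hθ' i, if_pos rfl]
    rcases hθi with ⟨hv, hs⟩ | ⟨hv, hs⟩ <;> rw [hs, hv]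
    · rw [show π + δ - 1 * (2*π) = -(π - δ) by ring, abs_neg, abs_of_nonneg (by linarith)]
    · rw [show -(π + δ) - (-1) * (2*π) = π - δ by ring, abs_of_nonneg (by linarith)]
  refine ⟨?_, hq'mem, ?_, hθ'i, by linarith⟩
  · -- (θ', q') ∈ X
    rw [hX]
    refine ⟨fun j => ?_, hq'mem⟩
    show θ' j ∈ Set.Icc (-(π+δ)) (π+δ)
    rw [hθ' j]
    split_ifs with hj
    · subst hj
      have : |θ j - Real.sign (θ j) * (2*π)| = π - δ := by
        rw [← hθ'i, hθ' j, if_pos rfl]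
      have h2 := abs_le.mp (le_of_eq this)
      exact Set.mem_Icc.mpr ⟨by linarith [h2.1], by linarith [h2.2]⟩
    · exact hθb j
  · -- m_e invariance
    intro e
    have hne : tail e ≠ head e := (hadj e).ne
    rw [hθ' (head e), hθ' (tail e), hq' e]
    split_ifs with hh ht ht
    · exact absurd (ht.trans hh.symm) hne
    · rw [hh]; ring
    · rw [ht]; ring
    · ring
end
end

section
/- Assume σ satisfies Property 1. Then for every t ∈ [-π-δ, π+δ] and every ς ∈ σ̂(t), one has |ς| ≥ α(|t|), where α is the class-K function from Property 1. -/
open Real Set Filter Topology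

noncomputable section

/-- A class-K function: continuous, strictly increasing on `[0,∞)` with `α(0)=0`. -/
def ClassK (α : ℝ → ℝ) : Prop :=
  ContinuousOn α (Set.Ici 0) ∧ StrictMonoOn α (Set.Ici 0) ∧ α 0 = 0

/-- A class-K∞ function: class-K and unbounded. -/
def ClassKInf (α : ℝ → ℝ) : Prop :=
  ClassK α ∧ Filter.Tendsto α Filter.atTop Filter.atTop

/-- `f` is piecewise continuous on `[a,b]`: there are finitely many points
`a ≤ p₀ < ⋯ < p_k ≤ b` such that `f` is continuous on each open subinterval and the
one-sided limits of `f` at the partition points exist as finite numbers. -/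
def PiecewiseContinuousOn (f : ℝ → ℝ) (a b : ℝ) : Prop :=
  ∃ (k : ℕ) (p : Fin (k+1) → ℝ),
    StrictMono p ∧ a ≤ p 0 ∧ p (Fin.last k) ≤ b ∧
    (∀ i : Fin k, ContinuousOn f (Set.Ioo (p i.castSucc) (p i.succ))) ∧
    (∀ i : Fin (k+1),
      (∃ L : ℝ, Filter.Tendsto f (nhdsWithin (p i) (Set.Iio (p i) ∩ Set.Icc a b)) (nhds L)) ∧
      (∃ L : ℝ, Filter.Tendsto f (nhdsWithin (p i) (Set.Ioi (p i) ∩ Set.Icc a b)) (nhds L)))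

/-- Property 1 of the coupling function `σ` on `[-π-δ, π+δ]`: piecewise continuity,
oddness, and a class-K sector bound `sign(s)·σ(s) ≥ α(|s|)` away from `0`. -/
def Property1 (δ : ℝ) (σ : ℝ → ℝ) : Prop :=
  PiecewiseContinuousOn σ (-(π+δ)) (π+δ) ∧
  (∀ s ∈ Set.Icc (-(π+δ)) (π+δ), σ s = -σ (-s)) ∧
  ∃ α : ℝ → ℝ, ClassK α ∧
    ∀ s ∈ Set.Icc (-(π+δ)) (π+δ), s ≠ 0 → α |s| ≤ Real.sign s * σ s

/-- Krasovskii regularization of `σ` on the domain `[-π-δ, π+δ]`: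
`σ̂(t) = ⋂_{s>0} cl co σ([t-s, t+s] ∩ [-π-δ, π+δ])`. -/
def krasov (δ : ℝ) (σ : ℝ → ℝ) (t : ℝ) : Set ℝ :=
  ⋂ s ∈ Set.Ioi (0:ℝ),
    closure (convexHull ℝ (σ '' (Set.Icc (t - s) (t + s) ∩ Set.Icc (-(π+δ)) (π+δ))))


private lemma limit_aux (α : ℝ → ℝ) {c b e : ℝ} (hc : ContinuousAt α c) (he : 0 < e)
    (h : ∀ s : ℝ, 0 < s → s < e → α (c - s) ≤ b) : α c ≤ b := by
  have h2 : Tendsto (fun s : ℝ => α (c - s)) (𝓝[>] (0:ℝ)) (𝓝 (α c)) := by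
    have h3 : Tendsto (fun s : ℝ => c - s) (𝓝[>] (0:ℝ)) (𝓝 c) := by
      have h4 : Tendsto (fun s : ℝ => c - s) (𝓝 (0:ℝ)) (𝓝 (c - 0)) :=
        tendsto_const_nhds.sub tendsto_id
      simp only [sub_zero] at h4
      exact h4.mono_left nhdsWithin_le_nhds
    exact hc.tendsto.comp h3
  refine le_of_tendsto h2 ?_
  filter_upwards [Ioo_mem_nhdsGT_of_mem (by simp [he] : (0:ℝ) ∈ Set.Ico 0 e)] with s hs
  exact h s hs.1 hs.2

/-- If `σ` satisfies Property 1 (with class-K sector bound `α`), then every element `ς`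
of the Krasovskii regularization `σ̂(t)` satisfies `|ς| ≥ α(|t|)`. -/
theorem stmt6 (δ : ℝ) (hδ : δ ∈ Set.Ioo 0 π) (σ : ℝ → ℝ)
    (hpc : PiecewiseContinuousOn σ (-(π+δ)) (π+δ))
    (hodd : ∀ s ∈ Set.Icc (-(π+δ)) (π+δ), σ s = -σ (-s))
    (α : ℝ → ℝ) (hα : ClassK α)
    (hsect : ∀ s ∈ Set.Icc (-(π+δ)) (π+δ), s ≠ 0 → α |s| ≤ Real.sign s * σ s) :
    ∀ t ∈ Set.Icc (-(π+δ)) (π+δ), ∀ ς ∈ krasov δ σ t, α |t| ≤ |ς| := by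
  obtain ⟨hαc, hαm, hα0⟩ := hα
  intro t ht ς hς
  have hmem : ∀ s : ℝ, 0 < s →
      ς ∈ closure (convexHull ℝ (σ '' (Set.Icc (t - s) (t + s) ∩ Set.Icc (-(π+δ)) (π+δ)))) := by
    intro s hs
    simp only [krasov, Set.mem_iInter] at hς
    exact hς s hs
  have bound : ∀ (c : ℝ) (S : Set ℝ), σ '' (Set.Icc (t - c) (t + c) ∩ Set.Icc (-(π+δ)) (π+δ)) ⊆ S →
      Convex ℝ S → IsClosed S → 0 < c → ς ∈ S := by
    intro c S hsub hconv hcl hc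
    have h1 := closure_mono (convexHull_min hsub hconv)
    rw [hcl.closure_eq] at h1
    exact h1 (hmem c hc)
  rcases lt_trichotomy t 0 with htneg | ht0 | htpos
  · -- t < 0
    have key : ∀ s : ℝ, 0 < s → s < -t → α (-t - s) ≤ -ς := by
      intro s hs hst
      have hsub : σ '' (Set.Icc (t - s) (t + s) ∩ Set.Icc (-(π+δ)) (π+δ)) ⊆
          Set.Iic (-(α (-t - s))) := by
        rintro _ ⟨u, ⟨⟨hu1, hu2⟩, huI⟩, rfl⟩
        have hu0 : u < 0 := lt_of_le_of_lt hu2 (by linarith)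
        have hsec := hsect u huI (ne_of_lt hu0)
        rw [Real.sign_of_neg hu0, abs_of_neg hu0] at hsec
        have hmono : α (-t - s) ≤ α (-u) :=
          hαm.monotoneOn (Set.mem_Ici.mpr (by linarith)) (Set.mem_Ici.mpr (by linarith))
            (by linarith)
        simp only [Set.mem_Iic]
        nlinarith [hsec, hmono]
      have := bound s _ hsub (convex_Iic _) isClosed_Iic hs
      simp only [Set.mem_Iic] at this
      linarith
    have hcont : ContinuousAt α (-t) := hαc.continuousAt (Ici_mem_nhds (by linarith))
    have := limit_aux α hcont (by linarith : (0:ℝ) < -t) key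
    rw [abs_of_neg htneg]
    linarith [neg_le_abs ς]
  · -- t = 0
    subst ht0
    simp only [abs_zero, hα0]
    exact abs_nonneg ς
  · -- t > 0
    have key : ∀ s : ℝ, 0 < s → s < t → α (t - s) ≤ ς := by
      intro s hs hst
      have hsub : σ '' (Set.Icc (t - s) (t + s) ∩ Set.Icc (-(π+δ)) (π+δ)) ⊆
          Set.Ici (α (t - s)) := by
        rintro _ ⟨u, ⟨⟨hu1, hu2⟩, huI⟩, rfl⟩
        have hu0 : 0 < u := lt_of_lt_of_le (by linarith) hu1
        have hsec := hsect u huI (ne_of_gt hu0)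
        rw [Real.sign_of_pos hu0, one_mul, abs_of_pos hu0] at hsec
        have hmono : α (t - s) ≤ α u :=
          hαm.monotoneOn (Set.mem_Ici.mpr (by linarith)) (Set.mem_Ici.mpr hu0.le) hu1
        simp only [Set.mem_Ici]
        linarith
      have := bound s _ hsub (convex_Ici _) isClosed_Ici hs
      simpa using this
    have hcont : ContinuousAt α t := hαc.continuousAt (Ici_mem_nhds htpos)
    have := limit_aux α hcont htpos key
    rw [abs_of_pos htpos]
    linarith [le_abs_self ς]
end
end

section
/- Assume σ satisfies Property 1. Then there exists a class-K∞ function η such that for every x ∈ X with m_e(x) ∈ [-π-δ, π+δ] for all edges e, and every v ∈ Σ̂(x), one has η(|x|_A) ≤ |v|². -/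
open Real Set Filter Topology Metric

noncomputable section

lemma build_eta (D : ℝ) (hD : 0 < D) (g : ℝ → ℝ)
    (hgm : MonotoneOn g (Set.Icc 0 D))
    (hgnn : ∀ t ∈ Set.Icc 0 D, 0 ≤ g t)
    (hgpos : ∀ t ∈ Set.Ioc 0 D, 0 < g t) :
    ∃ η, ClassKInf η ∧ ∀ r ∈ Set.Icc 0 D, η r ≤ g r := by
  set e1 : ℝ → ℝ := fun r => sInf ((fun t => g t + |r - t|) '' Set.Icc 0 D) with he1
  have hne : ∀ r : ℝ, ((fun t => g t + |r - t|) '' Set.Icc 0 D).Nonempty :=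
    fun r => ⟨_, Set.mem_image_of_mem _ (Set.left_mem_Icc.mpr hD.le)⟩
  have hbdd : ∀ r : ℝ, BddBelow ((fun t => g t + |r - t|) '' Set.Icc 0 D) := by
    intro r
    refine ⟨0, ?_⟩
    rintro y ⟨t, ht, rfl⟩
    exact add_nonneg (hgnn t ht) (abs_nonneg _)
  have h1nn : ∀ r, 0 ≤ e1 r := by
    intro r
    refine le_csInf (hne r) ?_
    rintro y ⟨t, ht, rfl⟩
    exact add_nonneg (hgnn t ht) (abs_nonneg _)
  have h1le : ∀ r ∈ Set.Icc 0 D, e1 r ≤ g r := by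
    intro r hr
    have := csInf_le (hbdd r) (Set.mem_image_of_mem _ hr)
    simpa using this
  have h1lip : ∀ r r' : ℝ, e1 r ≤ e1 r' + |r - r'| := by
    intro r r'
    rw [← sub_le_iff_le_add]
    refine le_csInf (hne r') ?_
    rintro y ⟨t, ht, rfl⟩
    have h1 : e1 r ≤ g t + |r - t| := csInf_le (hbdd r) (Set.mem_image_of_mem _ ht)
    have h2 : |r - t| ≤ |r - r'| + |r' - t| := abs_sub_le r r' t
    simp only []
    linarith
  have h1cont : Continuous e1 := by
    have : LipschitzWith 1 e1 := by
      refine LipschitzWith.of_dist_le_mul ?_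
      intro x y
      rw [Real.dist_eq, Real.dist_eq]
      push_cast
      rw [one_mul]
      rw [abs_sub_le_iff]
      constructor
      · linarith [h1lip x y]
      · have := h1lip y x
        rw [abs_sub_comm] at this
        linarith
    exact this.continuous
  have h1mono : MonotoneOn e1 (Set.Icc 0 D) := by
    intro a ha b hb hab
    refine le_csInf (hne b) ?_
    rintro y ⟨t, ht, rfl⟩
    have hmin : min t a ∈ Set.Icc 0 D := ⟨le_min ht.1 ha.1, min_le_of_left_le ht.2⟩
    have h1 : e1 a ≤ g (min t a) + |a - min t a| := csInf_le (hbdd a) (Set.mem_image_of_mem _ hmin)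
    rcases le_total t a with h | h
    · rw [min_eq_left h] at h1
      have : |a - t| = a - t := abs_of_nonneg (by linarith)
      have h2 : |b - t| = b - t := abs_of_nonneg (by linarith)
      simp only []
      rw [h2]; rw [this] at h1; linarith
    · rw [min_eq_right h] at h1
      have h2 : g a ≤ g t := hgm ha ht h
      simp only []
      have := abs_nonneg (b - t)
      simp at h1
      linarith
  have h1pos : ∀ r ∈ Set.Ioc 0 D, 0 < e1 r := by
    intro r hr
    have hr2 : r / 2 ∈ Set.Ioc 0 D := ⟨half_pos hr.1, by linarith [hr.2]⟩
    have hc : 0 < min (r / 2) (g (r / 2)) := lt_min (half_pos hr.1) (hgpos _ hr2)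
    refine lt_of_lt_of_le hc (le_csInf (hne r) ?_)
    rintro y ⟨t, ht, rfl⟩
    rcases le_total (r / 2) t with h | h
    · have : g (r / 2) ≤ g t := hgm ⟨(half_pos hr.1).le, hr2.2⟩ ht h
      have := abs_nonneg (r - t)
      simp only []
      have hmin := min_le_right (r/2) (g (r/2))
      linarith
    · have h2 : |r - t| = r - t := abs_of_nonneg (by linarith [hr.1])
      have hmin := min_le_left (r/2) (g (r/2))
      simp only []
      have := hgnn t ht
      linarith
  set μ : ℝ → ℝ := fun r => min (max r 0) D with hμdef
  have hμ : ∀ r, μ r ∈ Set.Icc 0 D := fun r => ⟨le_min (le_max_right r 0) hD.le, min_le_right _ _⟩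
  have hμeq : ∀ r ∈ Set.Icc 0 D, μ r = r := by
    intro r hr; simp [hμdef, max_eq_left hr.1, min_eq_left hr.2]
  have hμc : Continuous μ := ((continuous_id.max continuous_const).min continuous_const)
  have hμmono : Monotone μ := fun a b hab => min_le_min (max_le_max hab le_rfl) le_rfl
  have hRnn : ∀ x : ℝ, 0 ≤ x → 0 ≤ x / (1 + x) := fun x hx => div_nonneg hx (by linarith)
  have hRlt : ∀ x y : ℝ, 0 ≤ x → x < y → x / (1 + x) < y / (1 + y) := by
    intro x y hx hxy
    rw [div_lt_div_iff₀ (by linarith) (by linarith)]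
    nlinarith
  have hRle : ∀ x y : ℝ, 0 ≤ x → x ≤ y → x / (1 + x) ≤ y / (1 + y) := by
    intro x y hx hxy
    rcases eq_or_lt_of_le hxy with rfl | h
    · exact le_refl _
    · exact (hRlt x y hx h).le
  refine ⟨fun r => e1 (μ r) * (μ r / (1 + μ r)) + max (r - D) 0, ⟨⟨?_, ?_, ?_⟩, ?_⟩, ?_⟩
  · -- continuity
    have : Continuous fun r => e1 (μ r) * (μ r / (1 + μ r)) + max (r - D) 0 := by
      refine Continuous.add ?_ ((continuous_id.sub continuous_const).max continuous_const)
      refine Continuous.mul (h1cont.comp hμc) ?_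
      exact hμc.div (continuous_const.add hμc) (fun r => by have := (hμ r).1; positivity)
    exact this.continuousOn
  · -- strict mono on Ici 0
    intro a ha b hb hab
    simp only [Set.mem_Ici] at ha hb
    have hFmono : ∀ u v : ℝ, 0 ≤ u → u ≤ v →
        e1 (μ u) * (μ u / (1 + μ u)) ≤ e1 (μ v) * (μ v / (1 + μ v)) := by
      intro u v hu huv
      exact mul_le_mul (h1mono (hμ u) (hμ v) (hμmono huv))
        (hRle _ _ (hμ u).1 (hμmono huv)) (hRnn _ (hμ u).1) (h1nn _)
    rcases le_or_gt b D with hbD | hbD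
    · have hμa : μ a = a := hμeq a ⟨ha, by linarith⟩
      have hμb : μ b = b := hμeq b ⟨hb, hbD⟩
      have hbpos : 0 < b := lt_of_le_of_lt ha hab
      have he1b : 0 < e1 b := h1pos b ⟨hbpos, hbD⟩
      have h2 : e1 a ≤ e1 b := h1mono ⟨ha, by linarith⟩ ⟨hbpos.le, hbD⟩ hab.le
      have hmaxa : max (a - D) 0 = 0 := max_eq_right (by linarith)
      have hmaxb : max (b - D) 0 = 0 := max_eq_right (by linarith)
      dsimp only
      rw [hμa, hμb, hmaxa, hmaxb]
      have : e1 a * (a / (1 + a)) ≤ e1 b * (a / (1 + a)) :=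
        mul_le_mul_of_nonneg_right h2 (hRnn _ ha)
      have h3 : e1 b * (a / (1 + a)) < e1 b * (b / (1 + b)) :=
        (mul_lt_mul_iff_right₀ he1b).mpr (hRlt a b ha hab)
      linarith
    · have hF : e1 (μ a) * (μ a / (1 + μ a)) ≤ e1 (μ b) * (μ b / (1 + μ b)) :=
        hFmono a b ha hab.le
      have hmaxa : max (a - D) 0 ≤ max (b - D) 0 := max_le_max (by linarith) le_rfl
      have : max (a - D) 0 < max (b - D) 0 := by
        rcases le_or_gt a D with haD | haD
        · rw [max_eq_right (by linarith), max_eq_left (by linarith)]; linarith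
        · rw [max_eq_left (by linarith), max_eq_left (by linarith)]; linarith
      linarith
  · -- value at 0
    have : μ 0 = 0 := hμeq 0 ⟨le_refl 0, hD.le⟩
    dsimp only
    rw [this]
    simp [max_eq_right (by linarith : (0:ℝ) - D ≤ 0), hD.le]
  · -- tendsto atTop
    refine tendsto_atTop_mono ?_ (tendsto_atTop_add_const_right atTop (-D) tendsto_id)
    intro r
    have h1 : 0 ≤ e1 (μ r) * (μ r / (1 + μ r)) := mul_nonneg (h1nn _) (hRnn _ (hμ r).1)
    have h2 : r - D ≤ max (r - D) 0 := le_max_left _ _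
    simp only [id]
    linarith
  · -- bound
    intro r hr
    dsimp only
    rw [hμeq r hr, max_eq_right (by linarith [hr.2])]
    have hr1 : r / (1 + r) ≤ 1 := by
      rw [div_le_one (by linarith [hr.1])]; linarith
    have := mul_le_of_le_one_right (h1nn r) hr1
    have := h1le r hr
    linarith

lemma kr_bound (δ : ℝ) (σ α : ℝ → ℝ)
    (hαc : ContinuousOn α (Set.Ici 0)) (hαm : MonotoneOn α (Set.Ici 0)) (hα0 : α 0 = 0)
    (hsec : ∀ s ∈ Set.Icc (-(π+δ)) (π+δ), s ≠ 0 → α |s| ≤ Real.sign s * σ s)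
    (t : ℝ) (ht : t ∈ Set.Icc (-(π+δ)) (π+δ)) (v : ℝ) (hv : v ∈ krasov δ σ t) :
    α |t| ≤ |v| := by
  rcases lt_trichotomy t 0 with htn | rfl | htp
  · -- t < 0 : show v ≤ -α (-t)
    have key : ∀ s ∈ Set.Ioo (0:ℝ) (-t), v ≤ -α (-t - s) := by
      intro s hs
      have hmem := Set.mem_iInter₂.mp hv s hs.1
      have hsub : σ '' (Set.Icc (t - s) (t + s) ∩ Set.Icc (-(π+δ)) (π+δ)) ⊆
          Set.Iic (-α (-t - s)) := by
        rintro y ⟨u, ⟨hu1, hu2⟩, rfl⟩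
        have hu_neg : u < 0 := lt_of_le_of_lt hu1.2 (by linarith [hs.2])
        have hsign : Real.sign u = -1 := Real.sign_of_neg hu_neg
        have h1 := hsec u hu2 (ne_of_lt hu_neg)
        rw [hsign, abs_of_neg hu_neg] at h1
        have h2 : α (-t - s) ≤ α (-u) := by
          refine hαm ?_ ?_ (by linarith [hu1.2])
          · simp only [Set.mem_Ici]; linarith [hs.2]
          · simp only [Set.mem_Ici]; linarith
        simp only [Set.mem_Iic]
        nlinarith
      have hcl : closure (convexHull ℝ (σ '' (Set.Icc (t - s) (t + s) ∩
          Set.Icc (-(π+δ)) (π+δ)))) ⊆ Set.Iic (-α (-t - s)) :=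
        closure_minimal (convexHull_min hsub (convex_Iic _)) isClosed_Iic
      exact hcl hmem
    have hlim : Tendsto (fun s => α (-t - s)) (nhdsWithin 0 (Set.Ioi (0:ℝ))) (nhds (α (-t))) := by
      have hc : ContinuousWithinAt α (Set.Ici 0) (-t) := hαc (-t) (by simp only [Set.mem_Ici]; linarith)
      refine hc.tendsto.comp ?_
      rw [tendsto_nhdsWithin_iff]
      constructor
      · have h0 : Tendsto (fun s : ℝ => -t - s) (nhds 0) (nhds (-t - 0)) :=
          tendsto_const_nhds.sub tendsto_id
        rw [sub_zero] at h0
        exact h0.mono_left nhdsWithin_le_nhds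
      · have : ∀ᶠ s in nhds (0:ℝ), s < -t := eventually_lt_nhds (by linarith)
        filter_upwards [this.filter_mono nhdsWithin_le_nhds] with s hs
        simp only [Set.mem_Ici]; linarith
    have hev : ∀ᶠ s in nhdsWithin 0 (Set.Ioi (0:ℝ)), v ≤ -α (-t - s) := by
      have h1 : ∀ᶠ s in nhds (0:ℝ), s < -t := eventually_lt_nhds (by linarith)
      filter_upwards [h1.filter_mono nhdsWithin_le_nhds, self_mem_nhdsWithin] with s h2 h3
      exact key s ⟨h3, h2⟩
    have : v ≤ -α (-t) := ge_of_tendsto (hlim.neg) hev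
    rw [abs_of_neg htn]
    calc α (-t) ≤ -v := by linarith
      _ ≤ |v| := neg_le_abs v
  · rw [abs_zero, hα0]; exact abs_nonneg v
  · -- t > 0 : show α t ≤ v
    have key : ∀ s ∈ Set.Ioo (0:ℝ) t, α (t - s) ≤ v := by
      intro s hs
      have hmem := Set.mem_iInter₂.mp hv s hs.1
      have hsub : σ '' (Set.Icc (t - s) (t + s) ∩ Set.Icc (-(π+δ)) (π+δ)) ⊆
          Set.Ici (α (t - s)) := by
        rintro y ⟨u, ⟨hu1, hu2⟩, rfl⟩
        have hu_pos : 0 < u := lt_of_lt_of_le (by linarith [hs.2]) hu1.1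
        have hsign : Real.sign u = 1 := Real.sign_of_pos hu_pos
        have h1 := hsec u hu2 (ne_of_gt hu_pos)
        rw [hsign, abs_of_pos hu_pos, one_mul] at h1
        have h2 : α (t - s) ≤ α u := by
          refine hαm ?_ ?_ hu1.1
          · simp only [Set.mem_Ici]; linarith [hs.2]
          · simp only [Set.mem_Ici]; linarith
        simp only [Set.mem_Ici]
        linarith
      have hcl : closure (convexHull ℝ (σ '' (Set.Icc (t - s) (t + s) ∩
          Set.Icc (-(π+δ)) (π+δ)))) ⊆ Set.Ici (α (t - s)) :=
        closure_minimal (convexHull_min hsub (convex_Ici _)) isClosed_Ici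
      exact hcl hmem
    have hlim : Tendsto (fun s => α (t - s)) (nhdsWithin 0 (Set.Ioi (0:ℝ))) (nhds (α t)) := by
      have hc : ContinuousWithinAt α (Set.Ici 0) t := hαc t (by simp only [Set.mem_Ici]; linarith)
      refine hc.tendsto.comp ?_
      rw [tendsto_nhdsWithin_iff]
      constructor
      · have h0 : Tendsto (fun s : ℝ => t - s) (nhds 0) (nhds (t - 0)) :=
          tendsto_const_nhds.sub tendsto_id
        rw [sub_zero] at h0
        exact h0.mono_left nhdsWithin_le_nhds
      · have : ∀ᶠ s in nhds (0:ℝ), s < t := eventually_lt_nhds htp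
        filter_upwards [this.filter_mono nhdsWithin_le_nhds] with s hs
        simp only [Set.mem_Ici]; linarith
    have hev : ∀ᶠ s in nhdsWithin 0 (Set.Ioi (0:ℝ)), α (t - s) ≤ v := by
      have h1 : ∀ᶠ s in nhds (0:ℝ), s < t := eventually_lt_nhds htp
      filter_upwards [h1.filter_mono nhdsWithin_le_nhds, self_mem_nhdsWithin] with s h2 h3
      exact key s ⟨h3, h2⟩
    have hαtv : α t ≤ v := le_of_tendsto hlim hev
    rw [abs_of_pos htp]
    exact hαtv.trans (le_abs_self v)


/-- Lemma 5 of the paper: there exists a class-K∞ function `η` such that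
`η(|x|_A) ≤ |v|²` for every `v ∈ Σ̂(x)`. -/
theorem stmt7 (δ : ℝ) (hδ : δ ∈ Set.Ioo 0 π) (σ : ℝ → ℝ) (hσ : Property1 δ σ)
    (n : ℕ) (hn : 2 ≤ n) (G : SimpleGraph (Fin n)) (hG : G.IsTree)
    (tail head : Fin (n-1) → Fin n)
    (hadj : ∀ e, G.Adj (tail e) (head e))
    (hinj : Function.Injective fun e => s(tail e, head e))
    (hsurj : ∀ p ∈ G.edgeSet, ∃ e, s(tail e, head e) = p)
    (X A : Set (EuclideanSpace ℝ (Fin n ⊕ Fin (n-1))))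
    (hX : X = {x | (∀ i, x (Sum.inl i) ∈ Set.Icc (-(π+δ)) (π+δ)) ∧
                   ∀ e, x (Sum.inr e) ∈ ({-1, 0, 1} : Set ℝ)})
    (m : Fin (n-1) → EuclideanSpace ℝ (Fin n ⊕ Fin (n-1)) → ℝ)
    (hm : ∀ e x, m e x = x (Sum.inl (head e)) - x (Sum.inl (tail e)) + 2 * x (Sum.inr e) * π)
    (hA : A = {x ∈ X | ∀ e, m e x = 0}) :
    ∃ η : ℝ → ℝ, ClassKInf η ∧
      ∀ x ∈ X, (∀ e, m e x ∈ Set.Icc (-(π+δ)) (π+δ)) →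
        ∀ v : EuclideanSpace ℝ (Fin (n-1)), (∀ e, v e ∈ krasov δ σ (m e x)) →
          η (Metric.infDist x A) ≤ ‖v‖^2 := by
  obtain ⟨hδ0, hδπ⟩ := hδ
  have hπ := Real.pi_gt_three
  have hP : (0:ℝ) < π + δ := by linarith
  have hP1 : (1:ℝ) ≤ π + δ := by linarith
  obtain ⟨-, -, α, ⟨hαc, hαsm, hα0⟩, hsec⟩ := hσ
  have hαm : MonotoneOn α (Set.Ici 0) := hαsm.monotoneOn
  have hαnn : ∀ s : ℝ, 0 ≤ α |s| := by
    intro s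
    have := hαm Set.self_mem_Ici (Set.mem_Ici.mpr (abs_nonneg s)) (abs_nonneg s)
    rwa [hα0] at this
  have hn' : (2:ℝ) ≤ (n:ℝ) := by exact_mod_cast hn
  have hcoord : ∀ j : Fin n ⊕ Fin (n-1),
      Continuous fun x : EuclideanSpace ℝ (Fin n ⊕ Fin (n-1)) => x j :=
    fun j => (EuclideanSpace.proj j).continuous
  have hmc : ∀ e, Continuous (m e) := by
    intro e
    have hme : m e = fun x => x (Sum.inl (head e)) - x (Sum.inl (tail e)) + 2 * x (Sum.inr e) * π :=
      funext (hm e)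
    rw [hme]
    exact ((hcoord (Sum.inl (head e))).sub (hcoord (Sum.inl (tail e)))).add ((continuous_const.mul (hcoord (Sum.inr e))).mul continuous_const)
  set φ : EuclideanSpace ℝ (Fin n ⊕ Fin (n-1)) → ℝ :=
    fun x => ∑ e : Fin (n-1), (α |m e x|)^2 with hφdef
  have hφnn : ∀ x, 0 ≤ φ x := fun x => Finset.sum_nonneg fun e _ => sq_nonneg _
  have hφc : ∀ s : Set (EuclideanSpace ℝ (Fin n ⊕ Fin (n-1))), ContinuousOn φ s := by
    intro s
    refine continuousOn_finset_sum _ (fun e _ => ?_)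
    have h1 : ContinuousOn (fun x => α |m e x|) s := by
      refine ContinuousOn.comp hαc ((hmc e).abs.continuousOn) ?_
      intro x _
      exact Set.mem_Ici.mpr (abs_nonneg _)
    exact h1.pow 2
  have h0X : (0 : EuclideanSpace ℝ (Fin n ⊕ Fin (n-1))) ∈ X := by
    rw [hX]
    refine ⟨fun i => ?_, fun e => ?_⟩
    · have hz : (0 : EuclideanSpace ℝ (Fin n ⊕ Fin (n-1))) (Sum.inl i) = 0 := rfl
      rw [hz]
      constructor <;> [linarith; linarith]
    · have hz : (0 : EuclideanSpace ℝ (Fin n ⊕ Fin (n-1))) (Sum.inr e) = 0 := rfl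
      rw [hz]
      right; left; rfl
  have h0A : (0 : EuclideanSpace ℝ (Fin n ⊕ Fin (n-1))) ∈ A := by
    rw [hA]
    refine ⟨h0X, fun e => ?_⟩
    rw [hm]
    show (0:ℝ) - 0 + 2 * 0 * π = 0
    ring
  set D : ℝ := 2 * n * (π + δ) with hDdef
  have hD : 0 < D := by
    have : (0:ℝ) < n := by linarith
    positivity
  have hnormX : ∀ x ∈ X, ‖x‖ ≤ D := by
    intro x hx
    rw [hX] at hx
    obtain ⟨hθ, hq⟩ := hx
    rw [EuclideanSpace.norm_eq]
    have hterm : ∀ j, ‖x j‖^2 ≤ (π+δ)^2 := by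
      intro j
      rw [Real.norm_eq_abs]
      have habs : |x j| ≤ π + δ := by
        cases j with
        | inl i => exact abs_le.mpr ⟨(hθ i).1, (hθ i).2⟩
        | inr e =>
          rcases hq e with h | h | h <;> rw [h]
          · rw [abs_neg, abs_one]; linarith
          · rw [abs_zero]; linarith
          · rw [abs_one]; linarith
      nlinarith [abs_nonneg (x j), habs]
    have hcard : (Fintype.card (Fin n ⊕ Fin (n-1)) : ℝ) ≤ 2*n := by
      rw [Fintype.card_sum, Fintype.card_fin, Fintype.card_fin]
      push_cast
      have : ((n - 1 : ℕ) : ℝ) ≤ (n:ℝ) := by exact_mod_cast Nat.sub_le n 1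
      linarith
    have hsum : ∑ j, ‖x j‖ ^ 2 ≤ (Fintype.card (Fin n ⊕ Fin (n-1)) : ℝ) * (π+δ)^2 := by
      calc ∑ j, ‖x j‖ ^ 2 ≤ ∑ _j : Fin n ⊕ Fin (n-1), (π+δ)^2 :=
            Finset.sum_le_sum fun j _ => hterm j
        _ = (Fintype.card (Fin n ⊕ Fin (n-1)) : ℝ) * (π+δ)^2 := by
            rw [Finset.sum_const, nsmul_eq_mul, Finset.card_univ]
    have hsum2 : ∑ j, ‖x j‖ ^ 2 ≤ D^2 := by
      have hDsq : D^2 = ((2*n)^2) * (π+δ)^2 := by rw [hDdef]; ring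
      have hh1 : (Fintype.card (Fin n ⊕ Fin (n-1)) : ℝ) * (π+δ)^2 ≤ (2*n) * (π+δ)^2 :=
        mul_le_mul_of_nonneg_right hcard (sq_nonneg _)
      have hh2 : (2*(n:ℝ)) * (π+δ)^2 ≤ ((2*n)^2) * (π+δ)^2 :=
        mul_le_mul_of_nonneg_right (by nlinarith) (sq_nonneg _)
      linarith
    calc Real.sqrt (∑ j, ‖x j‖ ^ 2) ≤ Real.sqrt (D^2) := Real.sqrt_le_sqrt hsum2
      _ = D := Real.sqrt_sq hD.le
  have hdistD : ∀ x ∈ X, Metric.infDist x A ≤ D := by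
    intro x hx
    have := Metric.infDist_le_dist_of_mem h0A (x := x)
    rw [dist_zero_right] at this
    exact this.trans (hnormX x hx)
  have hXclosed : IsClosed X := by
    rw [hX]
    have h1 : IsClosed {x : EuclideanSpace ℝ (Fin n ⊕ Fin (n-1)) |
        ∀ i, x (Sum.inl i) ∈ Set.Icc (-(π+δ)) (π+δ)} := by
      rw [Set.setOf_forall]
      exact isClosed_iInter fun i => isClosed_Icc.preimage (hcoord (Sum.inl i))
    have h2 : IsClosed {x : EuclideanSpace ℝ (Fin n ⊕ Fin (n-1)) |
        ∀ e, x (Sum.inr e) ∈ ({-1, 0, 1} : Set ℝ)} := by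
      rw [Set.setOf_forall]
      refine isClosed_iInter fun e => IsClosed.preimage (hcoord (Sum.inr e)) ?_
      exact Set.Finite.isClosed (Set.toFinite _)
    exact h1.inter h2
  have hXcomp : IsCompact X := by
    refine Metric.isCompact_of_isClosed_isBounded hXclosed ?_
    refine Metric.isBounded_closedBall (x := 0) (r := D) |>.subset ?_
    intro x hx
    exact Metric.mem_closedBall.mpr (by rw [dist_zero_right]; exact hnormX x hx)
  set K : ℝ → Set (EuclideanSpace ℝ (Fin n ⊕ Fin (n-1))) := fun t =>
    {x | x ∈ X ∧ (∀ e, m e x ∈ Set.Icc (-(π+δ)) (π+δ)) ∧ t ≤ Metric.infDist x A} with hKdef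
  set g : ℝ → ℝ := fun t => sInf (insert 1 (φ '' K t)) with hgdef
  have hbddg : ∀ t, BddBelow (insert (1:ℝ) (φ '' K t)) := by
    intro t
    refine ⟨0, ?_⟩
    rintro y (rfl | ⟨x, _, rfl⟩)
    · norm_num
    · exact hφnn x
  have hgne : ∀ t : ℝ, (insert (1:ℝ) (φ '' K t)).Nonempty := fun t => ⟨1, Set.mem_insert _ _⟩
  have hgm : MonotoneOn g (Set.Icc 0 D) := by
    intro a _ b _ hab
    refine csInf_le_csInf (hbddg a) (hgne b) ?_
    refine Set.insert_subset_insert (Set.image_mono ?_)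
    intro x hx
    exact ⟨hx.1, hx.2.1, le_trans hab hx.2.2⟩
  have hgnn : ∀ t ∈ Set.Icc (0:ℝ) D, 0 ≤ g t := by
    intro t _
    refine le_csInf (hgne t) ?_
    rintro y (rfl | ⟨x, _, rfl⟩)
    · norm_num
    · exact hφnn x
  have hgle : ∀ x ∈ X, (∀ e, m e x ∈ Set.Icc (-(π+δ)) (π+δ)) →
      g (Metric.infDist x A) ≤ φ x := by
    intro x hx hmx
    exact csInf_le (hbddg _) (Set.mem_insert_of_mem _ ⟨x, ⟨hx, hmx, le_refl _⟩, rfl⟩)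
  have hKclosed : ∀ t, IsClosed (K t) := by
    intro t
    have h1 : IsClosed {x : EuclideanSpace ℝ (Fin n ⊕ Fin (n-1)) |
        ∀ e, m e x ∈ Set.Icc (-(π+δ)) (π+δ)} := by
      rw [Set.setOf_forall]
      exact isClosed_iInter fun e => isClosed_Icc.preimage (hmc e)
    have h2 : IsClosed {x : EuclideanSpace ℝ (Fin n ⊕ Fin (n-1)) |
        t ≤ Metric.infDist x A} :=
      isClosed_le continuous_const (continuous_infDist_pt A)
    have hKeq : K t = X ∩ ({x | ∀ e, m e x ∈ Set.Icc (-(π+δ)) (π+δ)} ∩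
        {x | t ≤ Metric.infDist x A}) := by
      ext x
      simp only [hKdef, Set.mem_setOf_eq, Set.mem_inter_iff]
    rw [hKeq]
    exact hXclosed.inter (h1.inter h2)
  have hgpos : ∀ t ∈ Set.Ioc (0:ℝ) D, 0 < g t := by
    intro t ht
    rcases Set.eq_empty_or_nonempty (K t) with hemp | hne'
    · rw [hgdef]
      dsimp only
      rw [hemp]
      simp
    · have hKc : IsCompact (K t) := hXcomp.of_isClosed_subset (hKclosed t) (fun x hx => hx.1)
      obtain ⟨x₀, hx₀, hmin⟩ := hKc.exists_isMinOn hne' (hφc (K t))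
      have hφx₀ : 0 < φ x₀ := by
        rcases (hφnn x₀).lt_or_eq with h | h
        · exact h
        · exfalso
          have hall : ∀ e, m e x₀ = 0 := by
            intro e
            by_contra hne0
            have habs : 0 < |m e x₀| := abs_pos.mpr hne0
            have hαp : 0 < α |m e x₀| := by
              have := hαsm Set.self_mem_Ici (Set.mem_Ici.mpr (abs_nonneg _)) habs
              rwa [hα0] at this
            have hsum : 0 < φ x₀ :=
              Finset.sum_pos' (fun e' _ => sq_nonneg _)
                ⟨e, Finset.mem_univ e, pow_pos hαp 2⟩
            linarith
          have hx₀A : x₀ ∈ A := by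
            rw [hA]
            exact ⟨hx₀.1, hall⟩
          have hzero : Metric.infDist x₀ A = 0 := Metric.infDist_zero_of_mem hx₀A
          have := hx₀.2.2
          rw [hzero] at this
          linarith [ht.1]
      have hc : 0 < min 1 (φ x₀) := lt_min one_pos hφx₀
      refine lt_of_lt_of_le hc (le_csInf (hgne t) ?_)
      rintro y (rfl | ⟨x, hx, rfl⟩)
      · exact min_le_left _ _
      · exact le_trans (min_le_right _ _) (hmin hx)
  obtain ⟨η, hη, hηg⟩ := build_eta D hD g hgm hgnn hgpos
  refine ⟨η, hη, ?_⟩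
  intro x hxX hmx v hv
  have hr : Metric.infDist x A ∈ Set.Icc 0 D := ⟨Metric.infDist_nonneg, hdistD x hxX⟩
  have h1 : η (Metric.infDist x A) ≤ g (Metric.infDist x A) := hηg _ hr
  have h2 : g (Metric.infDist x A) ≤ φ x := hgle x hxX hmx
  have h3 : φ x ≤ ‖v‖^2 := by
    have hnorm : ‖v‖^2 = ∑ e, (v e)^2 := by
      rw [EuclideanSpace.norm_eq,
        Real.sq_sqrt (Finset.sum_nonneg fun e _ => sq_nonneg _)]
      congr 1
      ext e
      rw [Real.norm_eq_abs, sq_abs]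
    rw [hnorm, hφdef]
    refine Finset.sum_le_sum fun e _ => ?_
    have hb := kr_bound δ σ α hαc hαm hα0 hsec (m e x) (hmx e) (v e) (hv e)
    have h4 : (α |m e x|)^2 ≤ |v e|^2 := by nlinarith [hαnn (m e x)]
    rwa [sq_abs] at h4
  linarith
end
end

section
/- Let B be the oriented incidence matrix of a tree on n ≥ 2 vertices and let λ denote the smallest eigenvalue of the symmetric matrix BᵀB (λ > 0 since G is a tree). Let ω_m ≤ ω_M be real numbers, c > 0, μ > 0, and suppose κ ≥ 2c(n−1)(ω_M − ω_m)/(λμ²). Then for every v ∈ ℝ^{n-1} with |v_e| ≤ c for every edge e and |v| ≥ μ, and every w ∈ ℝ^n with all entries in [ω_m, ω_M], one has ⟨v, Bᵀw⟩ − κ⟨v, (BᵀB)v⟩ ≤ −(1/2)κλμ². -/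
open Matrix

noncomputable section

/-- Oriented incidence matrix of a graph on `Fin n` with `n-1` oriented edges
given by `tail` and `head`: column `e` equals `e_{head e} - e_{tail e}`. -/
def incB (n : ℕ) (tail head : Fin (n-1) → Fin n) : Matrix (Fin n) (Fin (n-1)) ℝ :=
  fun i e => (if i = head e then 1 else 0) - (if i = tail e then 1 else 0)

/-! Since `(Bᵀw)_e = w_{head e} - w_{tail e}` lies in `[ω_m - ω_M, ω_M - ω_m]`, the linear term is at
most `c (n-1) (ω_M - ω_m)`, while the Rayleigh bound `⟨v, BᵀBv⟩ ≥ λ|v|² ≥ λμ²` makes the quadratic term at least `κλμ²`; the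
hypothesis on `κ` says the linear term is at most half of that. -/

namespace Matrix

variable {ι : Type*} [Fintype ι]

theorem IsHermitian.mul_dotProduct_self_le_dotProduct_mulVec [DecidableEq ι]
    {A : Matrix ι ι ℝ} (hA : A.IsHermitian) {lam : ℝ}
    (hmin : ∀ (μ' : ℝ) (y : ι → ℝ), y ≠ 0 → A *ᵥ y = μ' • y → lam ≤ μ') (v : ι → ℝ) :
    lam * (v ⬝ᵥ v) ≤ v ⬝ᵥ A *ᵥ v := by
  set A' := A - lam • (1 : Matrix ι ι ℝ) with hA'
  have hA'_herm : A'.IsHermitian := hA.sub (by simp [IsHermitian])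
  have hA'_eig_nonneg : ∀ (e : ℝ) (y : ι → ℝ), y ≠ 0 → A' *ᵥ y = e • y → 0 ≤ e := by
    intro e y hy hA'y
    rw [hA', sub_mulVec, smul_mulVec, one_mulVec, sub_eq_iff_eq_add, ← add_smul] at hA'y
    linarith [hmin _ y hy hA'y]
  have hA'_psd : A'.PosSemidef := by
    refine hA'_herm.posSemidef_iff_eigenvalues_nonneg.mpr fun i => ?_
    refine hA'_eig_nonneg _ _ (fun h => ?_) (hA'_herm.mulVec_eigenvectorBasis i)
    exact hA'_herm.eigenvectorBasis.orthonormal.ne_zero i (by ext j; exact congrFun h j)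
  have h := hA'_psd.dotProduct_mulVec_nonneg v
  rw [star_trivial, hA', sub_mulVec, dotProduct_sub, smul_mulVec, one_mulVec,
    dotProduct_smul, smul_eq_mul] at h
  linarith

theorem dotProduct_le_card_mul_mul {v x : ι → ℝ} {c d : ℝ}
    (hv : ∀ i, |v i| ≤ c) (hx : ∀ i, |x i| ≤ d) :
    v ⬝ᵥ x ≤ Fintype.card ι * (c * d) := by
  calc v ⬝ᵥ x = ∑ i, v i * x i := rfl
    _ ≤ ∑ _i : ι, c * d := Finset.sum_le_sum fun i _ =>
        calc v i * x i ≤ |v i| * |x i| := (le_abs_self _).trans (abs_mul _ _).le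
          _ ≤ c * d := mul_le_mul (hv i) (hx i) (abs_nonneg _) ((abs_nonneg _).trans (hv i))
    _ = Fintype.card ι * (c * d) := by simp

end Matrix

theorem incB_transpose_mulVec {n : ℕ} (tail head : Fin (n-1) → Fin n) (w : Fin n → ℝ) (e : Fin (n-1)) :
    ((incB n tail head)ᵀ *ᵥ w) e = w (head e) - w (tail e) := by
  simp [mulVec, dotProduct, incB, sub_mul, Finset.sum_sub_distrib, ite_mul]

theorem stmt15_general (n : ℕ)
    (tail head : Fin (n-1) → Fin n)
    -- lam is the smallest eigenvalue of BᵀB (positive since G is a tree)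
    (lam : ℝ)
    (hlam_min : ∀ (μ' : ℝ) (y : Fin (n-1) → ℝ), y ≠ 0 →
      ((incB n tail head)ᵀ * incB n tail head).mulVec y = μ' • y → lam ≤ μ')
    (hlam_pos : 0 < lam)
    (ωm ωM : ℝ) (hω : ωm ≤ ωM) (c κ μ : ℝ) (hc : 0 < c) (hμ : 0 < μ)
    (hκ : 2 * c * ((n - 1 : ℕ) : ℝ) * (ωM - ωm) / (lam * μ^2) ≤ κ)
    (v : Fin (n-1) → ℝ) (hv : ∀ e, |v e| ≤ c)
    (hvnorm : μ ≤ Real.sqrt (∑ e, (v e)^2))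
    (w : Fin n → ℝ) (hw : ∀ i, w i ∈ Set.Icc ωm ωM) :
    v ⬝ᵥ ((incB n tail head)ᵀ.mulVec w)
      - κ * (v ⬝ᵥ ((incB n tail head)ᵀ * incB n tail head).mulVec v)
      ≤ -(1/2) * κ * lam * μ^2 := by
  set B := incB n tail head
  have hlin : v ⬝ᵥ Bᵀ *ᵥ w ≤ ((n - 1 : ℕ) : ℝ) * (c * (ωM - ωm)) := by
    simpa using dotProduct_le_card_mul_mul hv fun e => by
      rw [incB_transpose_mulVec]
      exact abs_sub_le_of_le_of_le (hw _).1 (hw _).2 (hw _).1 (hw _).2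
  have hquad : lam * (v ⬝ᵥ v) ≤ v ⬝ᵥ (Bᵀ * B) *ᵥ v := by
    refine IsHermitian.mul_dotProduct_self_le_dotProduct_mulVec ?_ hlam_min v
    simpa using isHermitian_conjTranspose_mul_self B
  have hμv : μ ^ 2 ≤ v ⬝ᵥ v := by
    simpa [dotProduct, sq] using (Real.le_sqrt' hμ).mp hvnorm
  have hκ' : 2 * c * ((n - 1 : ℕ) : ℝ) * (ωM - ωm) ≤ κ * (lam * μ ^ 2) :=
    (div_le_iff₀ (by positivity)).mp hκ
  have hκ_nonneg : 0 ≤ κ :=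
    le_trans (div_nonneg (mul_nonneg (by positivity) (sub_nonneg.mpr hω)) (by positivity)) hκ
  nlinarith [mul_le_mul_of_nonneg_left hquad hκ_nonneg,
    mul_le_mul_of_nonneg_left hμv (mul_nonneg hκ_nonneg hlam_pos.le)]

/-- With `λ > 0` the smallest eigenvalue of `BᵀB` and
`κ ≥ 2c(n−1)(ω_M − ω_m)/(λμ²)`, for every `v` with `|v_e| ≤ c` and Euclidean norm
`|v| ≥ μ`, and every `w` with entries in `[ω_m, ω_M]`:
`⟨v, Bᵀw⟩ − κ⟨v, BᵀBv⟩ ≤ −(1/2)κλμ²`. -/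
theorem stmt15 (n : ℕ) (hn : 2 ≤ n) (G : SimpleGraph (Fin n)) (hG : G.IsTree)
    (tail head : Fin (n-1) → Fin n)
    (hadj : ∀ e, G.Adj (tail e) (head e))
    (hinj : Function.Injective fun e => s(tail e, head e))
    (hsurj : ∀ p ∈ G.edgeSet, ∃ e, s(tail e, head e) = p)
    -- lam is the smallest eigenvalue of BᵀB (positive since G is a tree)
    (lam : ℝ)
    (hlam_eig : ∃ y : Fin (n-1) → ℝ, y ≠ 0 ∧
      ((incB n tail head)ᵀ * incB n tail head).mulVec y = lam • y)
    (hlam_min : ∀ (μ' : ℝ) (y : Fin (n-1) → ℝ), y ≠ 0 →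
      ((incB n tail head)ᵀ * incB n tail head).mulVec y = μ' • y → lam ≤ μ')
    (hlam_pos : 0 < lam)
    (ωm ωM : ℝ) (hω : ωm ≤ ωM) (c κ μ : ℝ) (hc : 0 < c) (hμ : 0 < μ)
    (hκ : 2 * c * ((n - 1 : ℕ) : ℝ) * (ωM - ωm) / (lam * μ^2) ≤ κ)
    (v : Fin (n-1) → ℝ) (hv : ∀ e, |v e| ≤ c)
    (hvnorm : μ ≤ Real.sqrt (∑ e, (v e)^2))
    (w : Fin n → ℝ) (hw : ∀ i, w i ∈ Set.Icc ωm ωM) :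
    v ⬝ᵥ ((incB n tail head)ᵀ.mulVec w)
      - κ * (v ⬝ᵥ ((incB n tail head)ᵀ * incB n tail head).mulVec v)
      ≤ -(1/2) * κ * lam * μ^2 :=
  stmt15_general n tail head lam hlam_min hlam_pos ωm ωM hω c κ μ hc hμ hκ v hv hvnorm w hw
end
end

section
/- Let β₀ be a class-KL function and let κ > 0, τ_D > 0 and J₀ ≥ 0. Define β(r,s) := β₀(r, (κ/2)·max{0, min(1, τ_D)·s − τ_D·J₀}) for r, s ≥ 0. Then β is a class-KL function, and for all r ≥ 0 and all t ≥ 0, j ≥ 0 satisfying j ≤ t/τ_D + J₀, one has β₀(r, κt) ≤ β(r, t + j). -/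
open Filter Topology

noncomputable section

/-- A class-KL function: for each fixed `s ≥ 0`, `r ↦ β(r,s)` is class-K, and for each
fixed `r ≥ 0`, `s ↦ β(r,s)` is nonincreasing on `[0,∞)` and tends to `0` at infinity. -/
def ClassKL (β : ℝ → ℝ → ℝ) : Prop :=
  (∀ s : ℝ, 0 ≤ s → ClassK (fun r => β r s)) ∧
  (∀ r : ℝ, 0 ≤ r → AntitoneOn (fun s => β r s) (Set.Ici 0) ∧
    Filter.Tendsto (fun s => β r s) Filter.atTop (nhds 0))

/-- For a class-KL function `β₀` and `κ, τ_D > 0`, `J₀ ≥ 0`, the function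
`β(r,s) := β₀(r, (κ/2)·max{0, min(1,τ_D)·s − τ_D·J₀})` is class-KL and satisfies
`β₀(r, κt) ≤ β(r, t+j)` whenever `t, j ≥ 0` and `j ≤ t/τ_D + J₀`. -/
theorem stmt16 (β₀ : ℝ → ℝ → ℝ) (hβ₀ : ClassKL β₀)
    (κ τD J₀ : ℝ) (hκ : 0 < κ) (hτ : 0 < τD) (hJ : 0 ≤ J₀)
    (β : ℝ → ℝ → ℝ)
    (hβ : ∀ r s, β r s = β₀ r ((κ/2) * max 0 (min 1 τD * s - τD * J₀))) :
    ClassKL β ∧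
      ∀ r : ℝ, 0 ≤ r → ∀ t : ℝ, 0 ≤ t → ∀ j : ℝ, 0 ≤ j → j ≤ t / τD + J₀ →
        β₀ r (κ * t) ≤ β r (t + j) := by
  have hm : (0:ℝ) < min 1 τD := lt_min one_pos hτ
  have hm1 : min 1 τD ≤ 1 := min_le_left _ _
  have hm2 : min 1 τD ≤ τD := min_le_right _ _
  have hκ2 : (0:ℝ) ≤ κ / 2 := by positivity
  have hcnn : ∀ s : ℝ, 0 ≤ (κ/2) * max 0 (min 1 τD * s - τD * J₀) := fun s =>
    mul_nonneg hκ2 (le_max_left _ _)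
  constructor
  · constructor
    · intro s hs
      obtain ⟨h1, h2, h3⟩ := hβ₀.1 _ (hcnn s)
      refine ⟨?_, ?_, ?_⟩
      · simpa only [hβ] using h1
      · simpa only [hβ] using h2
      · simpa only [hβ] using h3
    · intro r hr
      obtain ⟨hanti, htend⟩ := hβ₀.2 r hr
      constructor
      · intro a ha b hb hab
        simp only [hβ]
        refine hanti (Set.mem_Ici.2 (hcnn a)) (Set.mem_Ici.2 (hcnn b)) ?_
        refine mul_le_mul_of_nonneg_left (max_le_max le_rfl ?_) hκ2
        exact sub_le_sub_right (mul_le_mul_of_nonneg_left hab hm.le) _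
      · have h0 : Tendsto (fun s : ℝ => (κ/2) * (min 1 τD * s - τD * J₀)) atTop atTop := by
          apply Tendsto.const_mul_atTop (by positivity : (0:ℝ) < κ/2)
          exact tendsto_atTop_add_const_right _ _
            (Tendsto.const_mul_atTop hm tendsto_id)
        have h1 : Tendsto (fun s : ℝ => (κ/2) * max 0 (min 1 τD * s - τD * J₀)) atTop atTop :=
          tendsto_atTop_mono
            (fun s => mul_le_mul_of_nonneg_left (le_max_right _ _) hκ2) h0
        have := htend.comp h1
        refine this.congr fun s => ?_
        simp [hβ, Function.comp]
  · intro r hr t ht j hj hjt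
    rw [hβ]
    refine (hβ₀.2 r hr).1 (Set.mem_Ici.2 (hcnn _)) (Set.mem_Ici.2 (by positivity)) ?_
    have hj' : j * τD ≤ t + J₀ * τD := by
      have := mul_le_mul_of_nonneg_right hjt hτ.le
      rwa [add_mul, div_mul_cancel₀ _ hτ.ne'] at this
    have hmax : max 0 (min 1 τD * (t + j) - τD * J₀) ≤ 2 * t := by
      apply max_le (by linarith)
      nlinarith [mul_le_mul_of_nonneg_right hm1 ht,
        mul_le_mul_of_nonneg_right hm2 hJ,
        mul_le_mul_of_nonneg_left hj' hm.le,
        mul_le_mul_of_nonneg_right hm2 ht]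
    calc (κ/2) * max 0 (min 1 τD * (t + j) - τD * J₀) ≤ (κ/2) * (2*t) :=
          mul_le_mul_of_nonneg_left hmax hκ2
      _ = κ * t := by ring
end
end
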